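/- arXiv:1701.07369 — 2 statements merged into one kernel-verified Lean document; each statement's English description precedes it below -/
import Mathlib

section
/- For each fixed t ≥ 1 and d ≥ 0, the number of tuples (x₁,…,x_t) of nonzero elements of a finite abelian group Γ satisfying 2x₁ + ⋯ + 2x_t = 0 depends only on d and n, where 2^d is the order of the 2-torsion subgroup of Γ and n = |Γ|/2^d. In particular, if Γ and Γ' are finite abelian groups with |Γ| = |Γ'| and 2-torsion subgroups of the same order, then these counts agree. -/
/-!
Write `P_Γ(t)` for the number of nonzero `t`-tuples with `2x₁ + ⋯ + 2xₜ = 0`. Splitting off the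
first coordinate, a nonzero tuple `y` of length `t` extends by a nonzero `a` exactly when
`2a = -2(y₁ + ⋯ + yₜ)`. This target lies in the image of doubling, whose fibres over its image are
cosets of the 2-torsion subgroup `Γ[2]`, so the number of such `a` is `|Γ[2]|`, minus one if the
target is `0`. Hence `P_Γ(t + 1) + P_Γ(t) = |Γ[2]| (|Γ| - 1)^t` and `P_Γ(0) = 1`, so `P_Γ` is
determined by `|Γ|` and `|Γ[2]|`.
-/

open Finset Fintype

section Counting

variable {G : Type*} [AddCommGroup G] [Fintype G] [DecidableEq G]

lemma card_filter_add_self_eq_of_mem_range {c : G} (hc : ∃ b, b + b = c) :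
    #{a : G | a + a = c} = #{a : G | a + a = 0} :=
  AddMonoidHom.card_fiber_eq_of_mem_range (AddMonoidHom.id G + AddMonoidHom.id G) hc
    ⟨0, add_zero 0⟩

lemma card_filter_ne_zero_add_self_add_ite {c : G} (hc : ∃ b, b + b = c) :
    #{a ∈ {0}ᶜ | a + a = c} + (if c = 0 then 1 else 0) = #{a : G | a + a = 0} := by
  rw [← card_filter_add_self_eq_of_mem_range hc, compl_singleton, filter_erase]
  split_ifs with hc0
  · exact card_erase_add_one (by simp [hc0])
  · rw [erase_eq_of_notMem (by simpa [eq_comm] using hc0), add_zero]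

variable (G) in
def nonzeroTuples (t : ℕ) : Finset (Fin t → G) := piFinset fun _ ↦ {0}ᶜ

lemma card_nonzeroTuples (t : ℕ) : #(nonzeroTuples G t) = (card G - 1) ^ t := by
  simp [nonzeroTuples, card_compl]

lemma nonzeroTuples_succ (t : ℕ) :
    nonzeroTuples G (t + 1) =
      ({0}ᶜ ×ˢ nonzeroTuples G t).map (Fin.consEquiv fun _ ↦ G).toEmbedding := by
  have h := filter_piFinset_eq_map_consEquiv (fun _ : Fin (t + 1) ↦ ({0}ᶜ : Finset G)) fun _ ↦ True
  simp only [filter_true] at h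
  exact h

lemma card_filter_nonzeroTuples_succ (t : ℕ) :
    #{x ∈ nonzeroTuples G (t + 1) | ∑ i, (x i + x i) = 0} =
      ∑ y ∈ nonzeroTuples G t, #{a ∈ {0}ᶜ | a + a = -∑ i, (y i + y i)} := by
  rw [nonzeroTuples_succ, filter_map, card_map, card_filter, sum_product_right]
  refine sum_congr rfl fun y _ ↦ ?_
  rw [card_filter]
  refine sum_congr rfl fun a _ ↦ ?_
  simp [Fin.sum_univ_succ, add_eq_zero_iff_eq_neg]

lemma card_filter_nonzeroTuples_succ_add (t : ℕ) :
    #{x ∈ nonzeroTuples G (t + 1) | ∑ i, (x i + x i) = 0} +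
        #{x ∈ nonzeroTuples G t | ∑ i, (x i + x i) = 0} =
      #{a : G | a + a = 0} * (card G - 1) ^ t := by
  rw [card_filter_nonzeroTuples_succ, card_filter, ← sum_add_distrib, ← card_nonzeroTuples,
    mul_comm, ← smul_eq_mul, ← sum_const]
  refine sum_congr rfl fun y _ ↦ ?_
  have hrange : ∃ b, b + b = -∑ i, (y i + y i) := ⟨-∑ i, y i, by simp [sum_add_distrib]⟩
  simpa using card_filter_ne_zero_add_self_add_ite hrange

end Counting

noncomputable def nonzeroDoubleSumZeroCount (G : Type*) [AddCommGroup G] (t : ℕ) : ℕ :=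
  Nat.card {x : Fin t → G // (∀ i, x i ≠ 0) ∧ ∑ i, (x i + x i) = 0}

section NonzeroDoubleSumZeroCount

variable {G : Type*} [AddCommGroup G] [Fintype G]

lemma nonzeroDoubleSumZeroCount_eq_card_filter [DecidableEq G] (t : ℕ) :
    nonzeroDoubleSumZeroCount G t = #{x ∈ nonzeroTuples G t | ∑ i, (x i + x i) = 0} := by
  rw [nonzeroDoubleSumZeroCount, Nat.card_eq_fintype_card, Fintype.card_subtype]
  congr 1
  ext x
  simp [nonzeroTuples]

lemma nonzeroDoubleSumZeroCount_zero : nonzeroDoubleSumZeroCount G 0 = 1 := by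
  simp [nonzeroDoubleSumZeroCount]

lemma nonzeroDoubleSumZeroCount_succ_add (t : ℕ) :
    nonzeroDoubleSumZeroCount G (t + 1) + nonzeroDoubleSumZeroCount G t =
      Nat.card {a : G // a + a = 0} * (card G - 1) ^ t := by
  classical
  rw [nonzeroDoubleSumZeroCount_eq_card_filter, nonzeroDoubleSumZeroCount_eq_card_filter,
    card_filter_nonzeroTuples_succ_add, Nat.card_eq_fintype_card, Fintype.card_subtype]

lemma nonzeroDoubleSumZeroCount_eq_of_card_eq {G' : Type*} [AddCommGroup G'] [Fintype G']
    (hcard : card G = card G')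
    (htorsion : Nat.card {a : G // a + a = 0} = Nat.card {a : G' // a + a = 0}) (t : ℕ) :
    nonzeroDoubleSumZeroCount G t = nonzeroDoubleSumZeroCount G' t := by
  induction t with
  | zero => rw [nonzeroDoubleSumZeroCount_zero, nonzeroDoubleSumZeroCount_zero]
  | succ t ih =>
    have hG := nonzeroDoubleSumZeroCount_succ_add (G := G) t
    have hG' := nonzeroDoubleSumZeroCount_succ_add (G := G') t
    rw [hcard, htorsion, ih, ← hG'] at hG
    exact Nat.add_right_cancel hG

end NonzeroDoubleSumZeroCount

theorem stmt_8_general (Γ Γ' : Type*) [AddCommGroup Γ] [Fintype Γ] [AddCommGroup Γ'] [Fintype Γ']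
    (t d : ℕ)
    (hcard : Fintype.card Γ = Fintype.card Γ')
    (h2 : Nat.card {x : Γ // x + x = 0} = 2 ^ d)
    (h2' : Nat.card {x : Γ' // x + x = 0} = 2 ^ d) :
    Nat.card {x : Fin t → Γ // (∀ i, x i ≠ 0) ∧ ∑ i, (x i + x i) = 0} =
      Nat.card {x : Fin t → Γ' // (∀ i, x i ≠ 0) ∧ ∑ i, (x i + x i) = 0} :=
  nonzeroDoubleSumZeroCount_eq_of_card_eq hcard (h2.trans h2'.symm) t

theorem stmt_8 (Γ Γ' : Type*) [AddCommGroup Γ] [Fintype Γ] [AddCommGroup Γ'] [Fintype Γ']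
    (t d : ℕ) (ht : 1 ≤ t)
    (hcard : Fintype.card Γ = Fintype.card Γ')
    (h2 : Nat.card {x : Γ // x + x = 0} = 2 ^ d)
    (h2' : Nat.card {x : Γ' // x + x = 0} = 2 ^ d) :
    Nat.card {x : Fin t → Γ // (∀ i, x i ≠ 0) ∧ ∑ i, (x i + x i) = 0} =
      Nat.card {x : Fin t → Γ' // (∀ i, x i ≠ 0) ∧ ∑ i, (x i + x i) = 0} :=
  stmt_8_general Γ Γ' t d hcard h2 h2'
end

section
/- For each fixed t ≥ 1 and d ≥ 0, there is a polynomial f with integer coefficients such that for every finite abelian group Γ whose 2-torsion subgroup has order 2^d and |Γ| = 2^d n, the number of tuples (x₁,…,x_t) of nonzero elements with 2x₁ + ⋯ + 2x_t = 0 equals f(n). -/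
/-!
Write `c t` for the number of tuples. Count pairs `(z, y)` with `y` a tuple of `t` nonzero
elements and `2z + 2∑ yᵢ = 0` in two ways. Splitting on `z = 0` gives `c (t + 1) + c t`.
Fibring over `y` gives `2^d (|Γ| - 1)^t`, because the equation asks `z` to lie in a fixed
coset of the 2-torsion subgroup (`2∑ yᵢ` is a double). Hence
`c (t + 1) = 2^d (2^d n - 1)^t - c t` with `c 0 = 1`, and unrolling this recursion gives a
polynomial in `n`.
-/

open Finset Polynomial

section
variable {Γ : Type*} [AddCommGroup Γ]

theorem card_add_self_eq_add_self (w : Γ) :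
    Nat.card {z : Γ // z + z = w + w} = Nat.card {z : Γ // z + z = 0} :=
  Nat.card_congr <| (Equiv.subRight w).subtypeEquiv fun z => by
    simp [sub_add_sub_comm, sub_eq_zero]

theorem card_nonzero_tuples [Fintype Γ] (t : ℕ) :
    Nat.card {y : Fin t → Γ // ∀ i, y i ≠ 0} = (Fintype.card Γ - 1) ^ t := by
  classical
  have hne : Fintype.card {b : Γ // b ≠ 0} = Fintype.card Γ - 1 := by
    rw [Fintype.card_subtype_compl, Fintype.card_subtype_eq]
  rw [Nat.card_congr (Equiv.subtypePiEquivPi (p := fun _ (b : Γ) => b ≠ 0)), Nat.card_pi]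
  simp [hne]

variable (Γ) in
noncomputable def doubleSumZeroCount (t : ℕ) : ℕ :=
  Nat.card {x : Fin t → Γ // (∀ i, x i ≠ 0) ∧ ∑ i, (x i + x i) = 0}

variable (Γ) in
abbrev HeadSolutions (t : ℕ) : Type _ :=
  {p : Γ × (Fin t → Γ) // (∀ i, p.2 i ≠ 0) ∧ p.1 + p.1 + ∑ i, (p.2 i + p.2 i) = 0}

theorem doubleSumZeroCount_zero : doubleSumZeroCount Γ 0 = 1 := by
  simp [doubleSumZeroCount]

theorem card_headSolutions_eq_mul [Fintype Γ] (t : ℕ) :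
    Nat.card (HeadSolutions Γ t) =
      Nat.card {z : Γ // z + z = 0} * (Fintype.card Γ - 1) ^ t := by
  classical
  have e : HeadSolutions Γ t ≃ Σ y : {y : Fin t → Γ // ∀ i, y i ≠ 0},
      {z : Γ // z + z + ∑ i, (y.1 i + y.1 i) = 0} :=
    { toFun := fun p => ⟨⟨p.1.2, p.2.1⟩, p.1.1, p.2.2⟩
      invFun := fun q => ⟨(q.2.1, q.1.1), q.1.2, q.2.2⟩
      left_inv := fun _ => rfl
      right_inv := fun _ => rfl }
  have hfiber (y : Fin t → Γ) :
      Nat.card {z : Γ // z + z + ∑ i, (y i + y i) = 0} = Nat.card {z : Γ // z + z = 0} := by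
    rw [← card_add_self_eq_add_self (-∑ i, y i)]
    refine Nat.card_congr (Equiv.subtypeEquivRight fun z => ?_)
    rw [sum_add_distrib, ← neg_add, add_eq_zero_iff_eq_neg]
  rw [Nat.card_congr e, Nat.card_sigma, sum_congr rfl fun y _ => hfiber y.1, sum_const,
    card_univ, ← Nat.card_eq_fintype_card, card_nonzero_tuples, smul_eq_mul, mul_comm]

theorem card_headSolutions_eq_add [Fintype Γ] (t : ℕ) :
    Nat.card (HeadSolutions Γ t) = doubleSumZeroCount Γ (t + 1) + doubleSumZeroCount Γ t := by
  classical
  have e₁ : {p : HeadSolutions Γ t // p.1.1 ≠ 0} ≃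
      {x : Fin (t + 1) → Γ // (∀ i, x i ≠ 0) ∧ ∑ i, (x i + x i) = 0} :=
    (Equiv.subtypeSubtypeEquivSubtypeInter _ (fun p => p.1 ≠ 0)).trans <|
      (Fin.consEquiv fun _ => Γ).subtypeEquiv fun p => by
        simp only [Fin.forall_fin_succ, Fin.sum_univ_succ, Fin.consEquiv_apply, Fin.cons_zero,
          Fin.cons_succ]
        tauto
  have e₂ : {p : HeadSolutions Γ t // ¬p.1.1 ≠ 0} ≃
      {y : Fin t → Γ // (∀ i, y i ≠ 0) ∧ ∑ i, (y i + y i) = 0} :=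
    { toFun := fun p => ⟨p.1.1.2, p.1.2.1, by simpa [not_not.1 p.2] using p.1.2.2⟩
      invFun := fun y => ⟨⟨(0, y.1), y.2.1, by simpa using y.2.2⟩, not_not.2 rfl⟩
      left_inv := fun p => by
        ext
        · exact (not_not.1 p.2).symm
        · rfl
      right_inv := fun _ => rfl }
  rw [← Nat.card_congr (Equiv.sumCompl fun p : HeadSolutions Γ t => p.1.1 ≠ 0), Nat.card_sum,
    doubleSumZeroCount, doubleSumZeroCount, Nat.card_congr e₁, Nat.card_congr e₂]

theorem doubleSumZeroCount_succ_add [Fintype Γ] (t : ℕ) :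
    doubleSumZeroCount Γ (t + 1) + doubleSumZeroCount Γ t =
      Nat.card {z : Γ // z + z = 0} * (Fintype.card Γ - 1) ^ t := by
  rw [← card_headSolutions_eq_add, card_headSolutions_eq_mul]

end

noncomputable def doubleSumZeroPoly (d : ℕ) : ℕ → ℤ[X]
  | 0 => 1
  | t + 1 => C (2 ^ d) * (C (2 ^ d) * X - 1) ^ t - doubleSumZeroPoly d t

theorem doubleSumZeroCount_eq_eval {Γ : Type*} [AddCommGroup Γ] [Fintype Γ] {d n : ℕ}
    (hK : Nat.card {x : Γ // x + x = 0} = 2 ^ d) (hΓ : Fintype.card Γ = 2 ^ d * n) (t : ℕ) :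
    (doubleSumZeroCount Γ t : ℤ) = (doubleSumZeroPoly d t).eval (n : ℤ) := by
  induction t with
  | zero => simp [doubleSumZeroCount_zero, doubleSumZeroPoly]
  | succ t ih =>
    have hrec := doubleSumZeroCount_succ_add (Γ := Γ) t
    rw [hK, hΓ] at hrec
    have hpos : 1 ≤ 2 ^ d * n := hΓ ▸ Fintype.card_pos
    simp only [doubleSumZeroPoly, eval_sub, eval_mul, eval_pow, eval_C, eval_X, eval_one, ← ih]
    rw [eq_sub_iff_add_eq]
    exact_mod_cast hrec

theorem stmt_9_general (t d : ℕ) :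
    ∃ f : Polynomial ℤ,
      ∀ (Γ : Type) (_ : AddCommGroup Γ) (_ : Fintype Γ) (n : ℕ),
        Nat.card {x : Γ // x + x = 0} = 2 ^ d →
        Fintype.card Γ = 2 ^ d * n →
        (Nat.card {x : Fin t → Γ // (∀ i, x i ≠ 0) ∧ ∑ i, (x i + x i) = 0} : ℤ) =
          f.eval (n : ℤ) :=
  ⟨doubleSumZeroPoly d t, fun _ _ _ _ hK hΓ => doubleSumZeroCount_eq_eval hK hΓ t⟩

theorem stmt_9 (t d : ℕ) (ht : 1 ≤ t) :
    ∃ f : Polynomial ℤ,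
      ∀ (Γ : Type) (_ : AddCommGroup Γ) (_ : Fintype Γ) (n : ℕ),
        Nat.card {x : Γ // x + x = 0} = 2 ^ d →
        Fintype.card Γ = 2 ^ d * n →
        (Nat.card {x : Fin t → Γ // (∀ i, x i ≠ 0) ∧ ∑ i, (x i + x i) = 0} : ℤ) =
          f.eval (n : ℤ) :=
  stmt_9_general t d
end
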